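/- Let f_n(x) = ∑_{j=0}^{∞} x^j · H_{j+1}^{(n)} for |x| < 1. Then f_0(x) = 1/(1−x), and for every n ≥ 1 and every x with 0 < |x| < 1, f_n(x) = (1/(x(1−x))) · ∫_0^x f_{n−1}(y) dy. -/

import Mathlib

/-!
Multiplying `f_n` by `1 - x` telescopes the sums defining `H^{(n)}`, leaving
`∑ x^j H_{j+1}^{(n-1)} / (j+1)`. Integrating `f_{n-1}` term by term (dominated convergence, using
`0 ≤ H_j^{(k)} ≤ j`) gives `x` times the same series.
-/

/-- The generalized harmonic numbers: `genH k n = H_n^{(k)}`, defined by `H_n^{(0)} = 1`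
and `H_n^{(k)} = ∑_{j=1}^{n} H_j^{(k−1)}/j` for `k ≥ 1`. -/
noncomputable def genH : ℕ → ℕ → ℝ
  | 0, _ => 1
  | (k+1), n => ∑ j ∈ Finset.Icc 1 n, genH k j / (j : ℝ)

open Finset

lemma genH_nonneg (k n : ℕ) : 0 ≤ genH k n := by
  cases k with
  | zero => exact zero_le_one
  | succ k => exact sum_nonneg fun j _ => div_nonneg (genH_nonneg k j) j.cast_nonneg

lemma genH_succ_zero (k : ℕ) : genH (k + 1) 0 = 0 := by
  simp [genH]

lemma genH_succ_succ_sub (k j : ℕ) :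
    genH (k + 1) (j + 1) - genH (k + 1) j = genH k (j + 1) / (j + 1) := by
  simp only [genH]
  rw [← insert_Icc_right_eq_Icc_add_one (by omega), sum_insert (by simp)]
  push_cast
  ring

lemma genH_le (k n : ℕ) : genH k (n + 1) ≤ n + 1 := by
  cases k with
  | zero => simp [genH]
  | succ k =>
    calc genH (k + 1) (n + 1) ≤ ∑ _j ∈ Icc 1 (n + 1), (1 : ℝ) := by
          refine sum_le_sum fun j hj => ?_
          obtain ⟨i, rfl⟩ : ∃ i, j = i + 1 := ⟨j - 1, by grind⟩
          rw [div_le_one (by positivity)]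
          exact_mod_cast genH_le k i
      _ = n + 1 := by simp

lemma summable_norm_genH_mul_abs_pow (k : ℕ) {r : ℝ} (hr : |r| < 1) :
    Summable fun j : ℕ => ‖genH k (j + 1)‖ * |r| ^ j := by
  have hgeom : Summable fun j : ℕ => ((j : ℝ) + 1) * |r| ^ j := by
    simpa [add_mul] using (summable_pow_mul_geometric_of_norm_lt_one 1 (r := |r|)
      (by simpa using hr)).add (summable_geometric_of_lt_one (abs_nonneg r) hr)
  refine hgeom.of_nonneg_of_le (fun j => by positivity) fun j => ?_
  rw [Real.norm_of_nonneg (genH_nonneg _ _)]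
  exact mul_le_mul_of_nonneg_right (genH_le k j) (by positivity)

lemma summable_pow_mul_genH (k : ℕ) {x : ℝ} (hx : |x| < 1) :
    Summable fun j : ℕ => x ^ j * genH k (j + 1) :=
  (summable_norm_genH_mul_abs_pow k hx).of_norm_bounded fun j => by
    rw [norm_mul, norm_pow, Real.norm_eq_abs, mul_comm]

section
variable {R : Type*} [CommRing R] [TopologicalSpace R] [IsTopologicalRing R] [T2Space R]

lemma one_sub_mul_tsum_pow_mul_succ {c : ℕ → R} (hc₀ : c 0 = 0) {x : R}
    (hc : Summable fun j => x ^ j * c (j + 1)) :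
    (1 - x) * ∑' j, x ^ j * c (j + 1) = ∑' j, x ^ j * (c (j + 1) - c j) := by
  have hshift : Summable fun j => x ^ (j + 1) * c (j + 1) :=
    (hc.mul_left x).congr fun j => by ring
  have hc' : Summable fun j => x ^ j * c j := (summable_nat_add_iff 1).mp hshift
  have hsplit : ∑' j, x ^ j * c j = x * ∑' j, x ^ j * c (j + 1) := by
    rw [hc'.tsum_eq_zero_add, hc₀, ← hc.tsum_mul_left]
    simp only [pow_zero, mul_zero, zero_add, pow_succ]
    exact tsum_congr fun j => by ring
  simp only [mul_sub]
  rw [hc.tsum_sub hc', hsplit]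
  ring
end

open intervalIntegral in
lemma integral_tsum_pow_mul {a : ℕ → ℝ} {x : ℝ} (ha : Summable fun j => ‖a j‖ * |x| ^ j) :
    ∫ y in (0 : ℝ)..x, ∑' j, y ^ j * a j = ∑' j, x ^ (j + 1) / (j + 1) * a j := by
  have hterm : ∀ t ∈ Set.uIoc 0 x, ∀ j, ‖t ^ j * a j‖ ≤ ‖a j‖ * |x| ^ j := fun t ht j => by
    have : |t| ≤ |x| := by simpa using Set.abs_sub_left_of_mem_uIcc (Set.uIoc_subset_uIcc ht)
    rw [norm_mul, norm_pow, Real.norm_eq_abs, mul_comm]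
    gcongr
  have hsum := hasSum_integral_of_dominated_convergence (μ := MeasureTheory.volume)
    (F := fun j (y : ℝ) => y ^ j * a j) (fun j _ => ‖a j‖ * |x| ^ j)
    (fun j => (by fun_prop : Continuous _).aestronglyMeasurable)
    (fun j => .of_forall fun t ht => hterm t ht j) (.of_forall fun _ _ => ha)
    intervalIntegrable_const
    (.of_forall fun t ht => (ha.of_norm_bounded (hterm t ht)).hasSum)
  rw [← hsum.tsum_eq]
  refine tsum_congr fun j => ?_
  simp [integral_mul_const, integral_pow]

/-- Let `f_n(x) = ∑_{j=0}^{∞} x^j H_{j+1}^{(n)}` for `|x| < 1`. Then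
`f_0(x) = 1/(1−x)`, and for every `n ≥ 1` and every `x` with `0 < |x| < 1`,
`f_n(x) = (1/(x(1−x))) ∫_0^x f_{n−1}(y) dy`. -/
theorem stmt13 :
    (∀ x : ℝ, |x| < 1 → (∑' j : ℕ, x ^ j * genH 0 (j + 1)) = 1 / (1 - x)) ∧
    (∀ n : ℕ, 1 ≤ n → ∀ x : ℝ, 0 < |x| → |x| < 1 →
      (∑' j : ℕ, x ^ j * genH n (j + 1))
        = 1 / (x * (1 - x)) * ∫ y in (0 : ℝ)..x, ∑' j : ℕ, y ^ j * genH (n - 1) (j + 1)) := by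
  refine ⟨fun x hx => by simp [genH, tsum_geometric_of_abs_lt_one hx], ?_⟩
  rintro (_ | m) hm x hx₀ hx₁
  · omega
  have hx : x ≠ 0 := abs_pos.mp hx₀
  have hx' : 1 - x ≠ 0 := sub_ne_zero.mpr (lt_of_abs_lt hx₁).ne'
  have htelescope := one_sub_mul_tsum_pow_mul_succ (genH_succ_zero m)
    (summable_pow_mul_genH (m + 1) hx₁)
  simp only [genH_succ_succ_sub] at htelescope
  have hintegral : ∑' j : ℕ, x ^ (j + 1) / (j + 1) * genH m (j + 1)
      = x * ∑' j : ℕ, x ^ j * (genH m (j + 1) / (j + 1)) := by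
    rw [← tsum_mul_left]
    exact tsum_congr fun j => by ring
  rw [Nat.add_sub_cancel, integral_tsum_pow_mul (summable_norm_genH_mul_abs_pow m hx₁), hintegral,
    ← htelescope]
  field_simp
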